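/- Let A be an m × k integer matrix of rank r and b an integer column vector such that the augmented matrix (A|b) has rank r+1 over ℚ (equivalently, Az = b has no rational solution). If p is a prime such that Az ≡ b (mod p) has a solution, then some (r+1)×(r+1) minor D of (A|b) that is nonzero over ℚ vanishes modulo p. -/

import Mathlib

/-!
Pick an `(r+1) × (r+1)` minor of `(A | b)` that is nonzero over `ℚ`. If it were nonzero mod `p`,
then `(A | b)` would have rank at least `r + 1` over `𝔽_p`. But a solution mod `p` puts `b` in the
column span of `A` over `𝔽_p`, and reduction mod `p` cannot raise the rank of `A` (a minor that
is nonzero mod `p` is a nonzero integer), so that rank is at most `r`.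
-/

open Module Submodule

namespace Matrix

variable {m n K : Type*}

theorem exists_linearIndependent_col_of_le_rank [Fintype m] [Fintype n] [Field K]
    (M : Matrix m n K) {s : ℕ} (h : s ≤ M.rank) : ∃ c : Fin s → n, LinearIndependent K (M.col ∘ c) := by
  obtain ⟨f, hf_col, -, hf_li⟩ := exists_fun_fin_finrank_span_eq K (Set.range M.col)
  choose c hc using hf_col
  have hs : s ≤ finrank K (span K (Set.range M.col)) := M.rank_eq_finrank_span_cols ▸ h
  refine ⟨c ∘ Fin.castLE hs, ?_⟩
  rw [← Function.comp_assoc, show M.col ∘ c = f from funext hc]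
  exact hf_li.comp _ (Fin.castLE_injective hs)

theorem exists_submatrix_det_ne_zero_of_le_rank [Fintype m] [Fintype n] [Field K]
    (M : Matrix m n K) {s : ℕ} (h : s ≤ M.rank) :
    ∃ (rows : Fin s → m) (cols : Fin s → n),
      Function.Injective rows ∧ Function.Injective cols ∧ (M.submatrix rows cols).det ≠ 0 := by
  obtain ⟨cols, hcols⟩ := M.exists_linearIndependent_col_of_le_rank h
  have hrank : s ≤ (M.submatrix id cols)ᵀ.rank := by
    rw [LinearIndependent.rank_matrix (by exact hcols), Fintype.card_fin]
  obtain ⟨rows, hrows⟩ := (M.submatrix id cols)ᵀ.exists_linearIndependent_col_of_le_rank hrank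
  have hunit : IsUnit (M.submatrix rows cols) :=
    linearIndependent_rows_iff_isUnit.mp (by exact hrows)
  exact ⟨rows, cols, Function.Injective.of_comp hrows.injective,
    Function.Injective.of_comp hcols.injective, ((isUnit_iff_isUnit_det _).mp hunit).ne_zero⟩

theorem le_rank_of_det_submatrix_ne_zero [Fintype n] [CommRing K] [IsDomain K] (M : Matrix m n K)
    {s : ℕ} {rows : Fin s → m} {cols : Fin s → n} (h : (M.submatrix rows cols).det ≠ 0) :
    s ≤ M.rank := by
  simpa [rank_of_det_ne_zero h] using M.rank_submatrix_le rows cols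

theorem le_rank_map_intCast_of_det_submatrix_ne_zero [Fintype n] [CommRing K] [IsDomain K]
    (A : Matrix m n ℤ) {s : ℕ} {rows : Fin s → m} {cols : Fin s → n}
    (h : ((A.submatrix rows cols).det : K) ≠ 0) : s ≤ (A.map (Int.cast : ℤ → K)).rank := by
  apply le_rank_of_det_submatrix_ne_zero (rows := rows) (cols := cols)
  rwa [submatrix_map, ← Int.cast_det]

theorem rank_map_intCast_le_rank_map_ratCast [Fintype m] [Fintype n] [Field K]
    (A : Matrix m n ℤ) : (A.map (Int.cast : ℤ → K)).rank ≤ (A.map (Int.cast : ℤ → ℚ)).rank := by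
  obtain ⟨rows, cols, -, -, h⟩ :=
    (A.map (Int.cast : ℤ → K)).exists_submatrix_det_ne_zero_of_le_rank le_rfl
  apply le_rank_map_intCast_of_det_submatrix_ne_zero (rows := rows) (cols := cols)
  rw [submatrix_map, ← Int.cast_det] at h
  exact Int.cast_ne_zero.mpr fun h0 => h (by rw [h0, Int.cast_zero])

theorem rank_le_rank_of_col_mem_span [Fintype m] [Fintype n] {n' : Type*} [Fintype n'] [Field K]
    {M : Matrix m n K} {N : Matrix m n' K} (h : ∀ j, M.col j ∈ span K (Set.range N.col)) :
    M.rank ≤ N.rank := by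
  rw [rank_eq_finrank_span_cols, rank_eq_finrank_span_cols]
  exact Submodule.finrank_mono (span_le.mpr (Set.range_subset_iff.mpr h))

def augment {R : Type*} {k : ℕ} (M : Matrix m (Fin k) R) (v : m → R) : Matrix m (Fin (k + 1)) R :=
  of fun i j => if h : (j : ℕ) < k then M i ⟨j, h⟩ else v i

theorem augment_map {R S : Type*} {k : ℕ} (M : Matrix m (Fin k) R) (v : m → R) (f : R → S) :
    (augment M v).map f = augment (M.map f) (f ∘ v) := by
  ext i j
  simp only [augment, map_apply, of_apply]
  split_ifs <;> rfl

theorem rank_augment_le_of_mulVec_eq [Fintype m] [Field K] {k : ℕ} (M : Matrix m (Fin k) K)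
    {z : Fin k → K} {v : m → K} (hz : M *ᵥ z = v) : (augment M v).rank ≤ M.rank := by
  refine rank_le_rank_of_col_mem_span fun j => ?_
  by_cases hj : (j : ℕ) < k
  · have : (augment M v).col j = M.col ⟨j, hj⟩ := by ext i; simp [augment, hj]
    exact this ▸ subset_span ⟨_, rfl⟩
  · have : (augment M v).col j = M *ᵥ z := by ext i; simp [augment, hj, hz]
    rw [this, ← range_mulVecLin]
    exact ⟨z, rfl⟩

end Matrix

open Matrix in
theorem minor_vanishes_mod_p
    (m k r : ℕ) (A : Matrix (Fin m) (Fin k) ℤ) (b : Fin m → ℤ)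
    (Aug : Matrix (Fin m) (Fin (k + 1)) ℤ)
    (hAug : Aug = Matrix.of fun i (j : Fin (k + 1)) =>
      if h : (j : ℕ) < k then A i ⟨j, h⟩ else b i)
    (hA : (A.map (Int.cast : ℤ → ℚ)).rank = r)
    (hAugRank : (Aug.map (Int.cast : ℤ → ℚ)).rank = r + 1)
    (p : ℕ) (hp : p.Prime)
    (hsol : ∃ z : Fin k → ZMod p,
      (A.map (Int.cast : ℤ → ZMod p)).mulVec z = fun i => ((b i : ZMod p))) :
    ∃ (rows : Fin (r + 1) → Fin m) (cols : Fin (r + 1) → Fin (k + 1)),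
      Function.Injective rows ∧ Function.Injective cols ∧
      (Aug.submatrix rows cols).det ≠ 0 ∧
      (p : ℤ) ∣ (Aug.submatrix rows cols).det := by
  have : Fact p.Prime := ⟨hp⟩
  obtain ⟨z, hz⟩ := hsol
  change Aug = augment A b at hAug
  subst hAug
  obtain ⟨rows, cols, hrows, hcols, hdet⟩ := exists_submatrix_det_ne_zero_of_le_rank _ hAugRank.ge
  rw [submatrix_map, ← Int.cast_det, Int.cast_ne_zero] at hdet
  refine ⟨rows, cols, hrows, hcols, hdet, ?_⟩
  rw [← ZMod.intCast_zmod_eq_zero_iff_dvd]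
  by_contra hdet_p
  have hrank : r + 1 ≤ r := calc
    r + 1 ≤ ((augment A b).map (Int.cast : ℤ → ZMod p)).rank :=
      le_rank_map_intCast_of_det_submatrix_ne_zero _ hdet_p
    _ ≤ (A.map (Int.cast : ℤ → ZMod p)).rank := by
      rw [augment_map]
      exact rank_augment_le_of_mulVec_eq _ hz
    _ ≤ r := hA ▸ rank_map_intCast_le_rank_map_ratCast A
  exact r.not_succ_le_self hrank
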